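/- Define P(n) to be the largest i < n with x_i = x_n (when it exists). If P(n) is undefined then h_{n-1} = u_n x_n, and if P(n) is defined then h_{n-1} = u_n u_{P(n)}^{-1} (i.e., u_n = h_{n-1} u_{P(n)}). -/

import Mathlib

variable {A : Type*} [DecidableEq A]

/-- `psiW a` is the morphism with `ψ_a(a) = a` and `ψ_a(x) = ax` for `x ≠ a`. -/
def psiW (a : A) (w : List A) : List A :=
  w.flatMap (fun b => if b = a then [a] else [a, b])

/-- `muW x n = ψ_{x 1} ∘ ⋯ ∘ ψ_{x n}`. -/
def muW (x : ℕ → A) : ℕ → List A → List A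
  | 0 => id
  | n + 1 => fun w => muW x n (psiW (x (n + 1)) w)

/-- `hW x n = μ_n (x_{n+1})`. -/
def hW (x : ℕ → A) (n : ℕ) : List A := muW x n [x (n + 1)]

/-- `p` is the palindromic right-closure of `w`: the shortest palindrome having `w`
as a prefix. -/
def IsPalClosure (w p : List A) : Prop :=
  w <+: p ∧ p.reverse = p ∧
    ∀ q : List A, w <+: q → q.reverse = q → p.length ≤ q.length

/-- The finite word `w` is a prefix of the infinite word `s`. -/
def PrefInf (w : List A) (s : ℕ → A) : Prop :=
  ∀ i : ℕ, ∀ h : i < w.length, w[i] = s i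

/-- Number of occurrences (positions) of `w` as a factor of `v`. -/
def occ (w v : List A) : ℕ :=
  (List.range (v.length + 1)).countP
    (fun i => decide (i + w.length ≤ v.length ∧ (v.drop i).take w.length = w))

/-- `cat z k = z 1 ++ z 2 ++ ⋯ ++ z k`. -/
def cat (z : ℕ → List A) (k : ℕ) : List A := ((List.range' 1 k).map z).flatten

/-- `z` is the Ziv-Lempel factorization of the infinite word `s`: each `z m` is
the shortest prefix of `z m · z (m+1) ⋯` occurring only once in `z 1 ⋯ z m`. -/
def IsZFact (s : ℕ → A) (z : ℕ → List A) : Prop :=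
  ∀ m : ℕ, 1 ≤ m → z m ≠ [] ∧ PrefInf (cat z m) s ∧
    occ (z m) (cat z m) = 1 ∧
    ∀ p : List A, p <+: z m → p ≠ z m → 2 ≤ occ p (cat z m)

/-- `c` is the Crochemore factorization of the infinite word `s`: each `c m` is
either a fresh letter, or the longest prefix of `c m · c (m+1) ⋯` occurring
twice in `c 1 ⋯ c m`. -/
def IsCFact (s : ℕ → A) (c : ℕ → List A) : Prop :=
  ∀ m : ℕ, 1 ≤ m → c m ≠ [] ∧ PrefInf (cat c m) s ∧
    ((∃ a : A, c m = [a] ∧ a ∉ cat c (m - 1)) ∨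
      (2 ≤ occ (c m) (cat c m) ∧
        occ (c m ++ [s (cat c m).length]) (cat c m ++ [s (cat c m).length]) = 1))

/-! Both identities are proved by induction on `n`, peeling off the first letter of the
directive word: `h_n = ψ_{x_1}(h'_{n-1})` and, by Justin's formula, `u_{n+1} = ψ_{x_1}(u'_n) x_1`,
where primes refer to the shifted directive word `x_2 x_3 ⋯`. When the last earlier occurrence of
`x_n` is `x_1`, the second identity reduces to the first one for the shifted word.

Justin's formula is in turn an induction resting on `(ψ_a(v) a)^(+) = ψ_a(v^(+)) a`, with the
closure computed as `w^(+) = w t^R` for `w = t s`, `s` the longest palindromic suffix of `w`: the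
longest palindromic suffix of `ψ_a(v) a` is `ψ_a(s) a`. -/

section Palindrome

variable {α : Type*}

theorem eq_reverse_take_and_drop_palindrome {w r : List α} (h : (w ++ r).reverse = w ++ r)
    (hr : r.length ≤ w.length) :
    r = (w.take r.length).reverse ∧ (w.drop r.length).reverse = w.drop r.length := by
  set k := r.length
  have hsplit : w.take k ++ (w.drop k ++ r) =
      r.reverse ++ ((w.drop k).reverse ++ (w.take k).reverse) := by
    rw [← List.append_assoc, List.take_append_drop, ← List.reverse_append,
      List.take_append_drop, ← List.reverse_append, h]
  obtain ⟨htake, hdrop⟩ := List.append_inj hsplit (by simp [k, hr])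
  rw [htake, List.reverse_reverse] at hdrop
  exact ⟨by rw [htake, List.reverse_reverse], (List.append_cancel_right hdrop).symm⟩

theorem exists_eq_append_singleton_of_suffix {s l : List α} {y : α} (h : s <:+ l ++ [y])
    (hs : s ≠ []) : ∃ z, s = z ++ [y] ∧ z <:+ l := by
  obtain ⟨z, c, rfl⟩ := (List.eq_nil_or_concat s).resolve_left hs
  rw [List.concat_eq_append] at h ⊢
  obtain ⟨hz, hc⟩ := (List.suffix_append_inj_of_length_eq (s₁ := [c]) (s₂ := [y]) rfl).1 h
  exact ⟨z, by rw [hc], hz⟩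

theorem IsPalClosure.unique {w p q : List α} (hp : IsPalClosure w p) (hq : IsPalClosure w q) :
    p = q := by
  obtain ⟨⟨r, rfl⟩, hpal, hmin⟩ := hp
  obtain ⟨⟨r', rfl⟩, hpal', hmin'⟩ := hq
  have hlen : r.length = r'.length := by
    have h₁ := hmin _ ⟨r', rfl⟩ hpal'
    have h₂ := hmin' _ ⟨r, rfl⟩ hpal
    simp only [List.length_append] at h₁ h₂
    omega
  have hr : r.length ≤ w.length := by
    simpa using hmin (w ++ w.reverse) ⟨_, rfl⟩ (by simp)
  rw [(eq_reverse_take_and_drop_palindrome hpal hr).1,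
    (eq_reverse_take_and_drop_palindrome hpal' (hlen ▸ hr)).1, hlen]

theorem IsPalClosure.append_singleton {w p : List α} {c : α} (h : IsPalClosure w p)
    (hc : w ++ [c] <+: p) : IsPalClosure (w ++ [c]) p :=
  ⟨hc, h.2.1, fun q hq hqpal => h.2.2 q ((List.prefix_append w [c]).trans hq) hqpal⟩

end Palindrome

section PalClosure

variable {α : Type*} [DecidableEq α]

def longestPalSuffix : List α → List α
  | [] => []
  | c :: w => if (c :: w).reverse = c :: w then c :: w else longestPalSuffix w

theorem longestPalSuffix_suffix (w : List α) : longestPalSuffix w <:+ w := by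
  induction w with
  | nil => exact List.suffix_refl _
  | cons c w ih =>
    rw [longestPalSuffix]
    split
    · exact List.suffix_refl _
    · exact ih.trans (List.suffix_cons c w)

theorem longestPalSuffix_reverse (w : List α) :
    (longestPalSuffix w).reverse = longestPalSuffix w := by
  induction w with
  | nil => rfl
  | cons c w ih =>
    rw [longestPalSuffix]
    split
    · assumption
    · exact ih

theorem length_le_longestPalSuffix {s w : List α} (hs : s <:+ w) (hpal : s.reverse = s) :
    s.length ≤ (longestPalSuffix w).length := by
  induction w with
  | nil => simp [List.suffix_nil.mp hs]
  | cons c w ih =>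
    rw [longestPalSuffix]
    split
    · exact hs.length_le
    · rcases List.suffix_cons_iff.mp hs with rfl | hs
      · contradiction
      · exact ih hs

theorem suffix_longestPalSuffix {s w : List α} (hs : s <:+ w) (hpal : s.reverse = s) :
    s <:+ longestPalSuffix w := by
  rcases List.suffix_or_suffix_of_suffix hs (longestPalSuffix_suffix w) with h | h
  · exact h
  · rw [h.eq_of_length (le_antisymm h.length_le (length_le_longestPalSuffix hs hpal))]

theorem longestPalSuffix_eq_of_forall {s w : List α} (hs : s <:+ w) (hpal : s.reverse = s)
    (hmax : ∀ s', s' <:+ w → s'.reverse = s' → s'.length ≤ s.length) :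
    longestPalSuffix w = s :=
  ((suffix_longestPalSuffix hs hpal).eq_of_length
    (le_antisymm (length_le_longestPalSuffix hs hpal)
      (hmax _ (longestPalSuffix_suffix w) (longestPalSuffix_reverse w)))).symm

theorem longestPalSuffix_ne_nil {w : List α} (hw : w ≠ []) : longestPalSuffix w ≠ [] := by
  intro h
  have := length_le_longestPalSuffix (List.singleton_suffix_iff_getLast?_eq_some.2
    (List.getLast?_eq_some_getLast hw)) List.reverse_singleton
  simp [h] at this

def palClosure (w : List α) : List α :=
  w ++ (w.take (w.length - (longestPalSuffix w).length)).reverse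

theorem palClosure_eq_append_reverse {t w : List α} (h : t ++ longestPalSuffix w = w) :
    palClosure w = w ++ t.reverse := by
  have hlen : w.length - (longestPalSuffix w).length = t.length := by
    rw [← congrArg List.length h, List.length_append]; omega
  rw [palClosure, hlen]
  nth_rewrite 2 [← h]
  rw [List.take_left]

theorem length_sub_le_of_append_palindrome {w r : List α} (h : (w ++ r).reverse = w ++ r) :
    w.length - (longestPalSuffix w).length ≤ r.length := by
  by_cases hr : r.length ≤ w.length
  · have := length_le_longestPalSuffix (List.drop_suffix r.length w)
      (eq_reverse_take_and_drop_palindrome h hr).2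
    simp only [List.length_drop] at this
    omega
  · omega

theorem isPalClosure_palClosure (w : List α) : IsPalClosure w (palClosure w) := by
  obtain ⟨t, ht⟩ := longestPalSuffix_suffix w
  refine ⟨⟨_, rfl⟩, ?_, ?_⟩
  · have hw : w.reverse = longestPalSuffix w ++ t.reverse := by
      conv_lhs => rw [← ht]
      rw [List.reverse_append, longestPalSuffix_reverse]
    rw [palClosure_eq_append_reverse ht, List.reverse_append, List.reverse_reverse, hw,
      ← List.append_assoc, ht]
  · rintro q ⟨r, rfl⟩ hq
    have := length_sub_le_of_append_palindrome hq
    simp only [palClosure, List.length_append, List.length_reverse, List.length_take]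
    omega

theorem IsPalClosure.eq_palClosure {w p : List α} (h : IsPalClosure w p) : p = palClosure w :=
  h.unique (isPalClosure_palClosure w)

theorem palClosure_append_singleton_of_prefix {w : List α} {c : α}
    (hc : w ++ [c] <+: palClosure w) : palClosure (w ++ [c]) = palClosure w :=
  ((isPalClosure_palClosure w).append_singleton hc).eq_palClosure.symm

theorem palClosure_of_reverse_eq {w : List α} (h : w.reverse = w) : palClosure w = w :=
  (IsPalClosure.eq_palClosure ⟨List.prefix_refl w, h, fun _ hq _ => hq.length_le⟩).symm

end PalClosure

section Psi

variable {α : Type*} [DecidableEq α] (a : α)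

@[simp]
theorem psiW_nil : psiW a ([] : List α) = [] := rfl

theorem psiW_cons (c : α) (w : List α) :
    psiW a (c :: w) = a :: if c = a then psiW a w else c :: psiW a w := by
  by_cases hc : c = a <;> simp [psiW, hc]

@[simp]
theorem psiW_append (u v : List α) : psiW a (u ++ v) = psiW a u ++ psiW a v := by
  simp [psiW]

theorem psiW_singleton (c : α) : psiW a [c] = if c = a then [a] else [a, c] := by
  simp [psiW]

theorem head?_psiW (w : List α) : (psiW a w).head? = w.head?.map fun _ => a := by
  cases w <;> simp [psiW_cons]

theorem psiW_suffix {s w : List α} (h : s <:+ w) : psiW a s <:+ psiW a w := by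
  obtain ⟨t, rfl⟩ := h
  simp

theorem reverse_psiW_append_singleton (w : List α) :
    (psiW a w ++ [a]).reverse = psiW a w.reverse ++ [a] := by
  induction w with
  | nil => rfl
  | cons c w ih =>
    have ih' : a :: (psiW a w).reverse = psiW a w.reverse ++ [a] := by simpa using ih
    rw [List.reverse_cons, psiW_append, psiW_singleton, psiW_cons]
    by_cases hc : c = a
    all_goals
      simp only [hc, if_true, if_false, List.reverse_append, List.reverse_cons, List.reverse_nil,
        List.nil_append, List.cons_append, List.append_assoc]
      rw [← List.cons_append, ih']
      simp

theorem psiW_injective : Function.Injective (psiW a) := by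
  intro u v h
  induction u generalizing v with
  | nil => cases v <;> simp_all [psiW_cons]
  | cons c u ih =>
    cases v with
    | nil => simp [psiW_cons] at h
    | cons d v =>
      rw [psiW_cons, psiW_cons, List.cons.injEq] at h
      replace h := h.2
      have hhead := congrArg List.head? h
      by_cases hc : c = a <;> by_cases hd : d = a <;>
        simp only [hc, hd, if_true, if_false] at h hhead
      · rw [hc, hd, ih h]
      · rw [head?_psiW] at hhead
        cases u <;> simp at hhead
        exact absurd hhead.symm hd
      · rw [head?_psiW] at hhead
        cases v <;> simp at hhead
        exact absurd hhead hc
      · rw [List.cons.injEq] at h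
        rw [h.1, ih h.2]

theorem exists_suffix_psiW_eq_of_suffix {z w : List α} (hz : z <:+ psiW a w) :
    ∃ s, s <:+ w ∧ (psiW a s = z ∨ psiW a s = a :: z) := by
  induction w with
  | nil => exact ⟨[], List.suffix_refl _, Or.inl (List.suffix_nil.mp hz).symm⟩
  | cons c w ih =>
    have extend : (∃ s, s <:+ w ∧ (psiW a s = z ∨ psiW a s = a :: z)) →
        ∃ s, s <:+ c :: w ∧ (psiW a s = z ∨ psiW a s = a :: z) :=
      fun ⟨s, hs, h⟩ => ⟨s, hs.trans (List.suffix_cons c w), h⟩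
    rw [psiW_cons] at hz
    rcases List.suffix_cons_iff.mp hz with rfl | hz
    · exact ⟨c :: w, List.suffix_refl _, Or.inl (psiW_cons a c w)⟩
    by_cases hc : c = a
    · rw [if_pos hc] at hz
      exact extend (ih hz)
    · rw [if_neg hc] at hz
      rcases List.suffix_cons_iff.mp hz with rfl | hz
      · exact ⟨c :: w, List.suffix_refl _, Or.inr (by rw [psiW_cons, if_neg hc])⟩
      · exact extend (ih hz)

theorem exists_suffix_psiW_eq_of_cons_suffix {z w : List α} (hz : a :: z <:+ psiW a w) :
    ∃ s, s <:+ w ∧ psiW a s = a :: z := by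
  obtain ⟨s, hs, h | h⟩ := exists_suffix_psiW_eq_of_suffix a hz
  · exact ⟨s, hs, h⟩
  · cases s with
    | nil => simp at h
    | cons c s =>
      by_cases hc : c = a
      · rw [psiW_cons, if_pos hc, List.cons.injEq] at h
        exact ⟨s, (List.suffix_cons c s).trans hs, h.2⟩
      · rw [psiW_cons, if_neg hc] at h
        simp_all

theorem longestPalSuffix_psiW_append_singleton (w : List α) :
    longestPalSuffix (psiW a w ++ [a]) = psiW a (longestPalSuffix w) ++ [a] := by
  refine longestPalSuffix_eq_of_forall
    (List.suffix_append_self_iff.2 (psiW_suffix a (longestPalSuffix_suffix w)))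
    (by rw [reverse_psiW_append_singleton, longestPalSuffix_reverse]) fun s' hs' hpal => ?_
  rcases eq_or_ne s' [] with rfl | hne
  · simp
  obtain ⟨z, rfl, hz⟩ := exists_eq_append_singleton_of_suffix hs' hne
  -- The palindrome `z ++ [a]` begins with `a`, so `z` is the image of a suffix of `w`.
  suffices ∃ s, s <:+ w ∧ psiW a s = z by
    obtain ⟨s, hs, rfl⟩ := this
    have hspal : s.reverse = s :=
      psiW_injective a (List.append_cancel_right (reverse_psiW_append_singleton a s ▸ hpal))
    simpa using (psiW_suffix a (suffix_longestPalSuffix hs hspal)).length_le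
  cases z with
  | nil => exact ⟨[], List.nil_suffix, rfl⟩
  | cons c z =>
    obtain rfl : a = c := by simpa using congrArg List.head? hpal
    exact exists_suffix_psiW_eq_of_cons_suffix a hz

theorem palClosure_psiW_append_singleton (w : List α) :
    palClosure (psiW a w ++ [a]) = psiW a (palClosure w) ++ [a] := by
  obtain ⟨t, ht⟩ := longestPalSuffix_suffix w
  have hsplit : psiW a t ++ longestPalSuffix (psiW a w ++ [a]) = psiW a w ++ [a] := by
    rw [longestPalSuffix_psiW_append_singleton, ← List.append_assoc, ← psiW_append, ht]
  have hrev : a :: (psiW a t).reverse = psiW a t.reverse ++ [a] := by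
    simpa using reverse_psiW_append_singleton a t
  rw [palClosure_eq_append_reverse hsplit, palClosure_eq_append_reverse ht, psiW_append,
    List.append_assoc, List.singleton_append, hrev, List.append_assoc]

/-- The longest palindromic suffix of `ψ_a(v b)` begins with `b ≠ a`, so it is preceded by an `a`
in `ψ_a(v b)`, and the closure of `ψ_a(v b)` mirrors that `a` first. -/
theorem palClosure_psiW_append_singleton_of_ne {b : α} (hb : b ≠ a) (v : List α) :
    palClosure (psiW a (v ++ [b]) ++ [a]) = palClosure (psiW a (v ++ [b])) := by
  set X := psiW a (v ++ [b])
  have hX : X = psiW a v ++ [a] ++ [b] := by simp [X, psiW_singleton, hb]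
  set L := longestPalSuffix X
  have hL : L <:+ psiW a v ++ [a] ++ [b] := hX ▸ longestPalSuffix_suffix X
  obtain ⟨z, hz, -⟩ := exists_eq_append_singleton_of_suffix hL
    (longestPalSuffix_ne_nil (by simp [hX]))
  have hhead : L.head? = some b := by
    have hpal : L.reverse = L := longestPalSuffix_reverse X
    rw [← hpal, hz]
    simp
  have haL : a :: L <:+ X := by
    obtain ⟨s, hs, h | h⟩ := exists_suffix_psiW_eq_of_suffix a (longestPalSuffix_suffix X)
    · have := congrArg List.head? h
      rw [head?_psiW, hhead] at this
      cases s <;> simp at this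
      exact absurd this.symm hb
    · exact h ▸ psiW_suffix a hs
  obtain ⟨Y, hY⟩ := haL
  have hcl : palClosure X = X ++ a :: Y.reverse := by
    rw [palClosure_eq_append_reverse (t := Y ++ [a]) (by rw [List.append_assoc]; exact hY)]
    simp
  exact palClosure_append_singleton_of_prefix (by rw [hcl]; exact ⟨Y.reverse, by simp⟩)

theorem palClosure_psiW_append_pair (b : α) (v : List α) :
    palClosure (psiW a v ++ [a, b]) = psiW a (palClosure (v ++ [b])) ++ [a] := by
  by_cases hb : b = a
  · subst hb
    simpa [psiW_singleton] using palClosure_psiW_append_singleton b (v ++ [b])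
  · have hX : psiW a v ++ [a, b] = psiW a (v ++ [b]) := by simp [psiW_singleton, hb]
    rw [hX, ← palClosure_psiW_append_singleton_of_ne a hb, palClosure_psiW_append_singleton]

end Psi

section DirectiveWord

variable {α : Type*} [DecidableEq α]

def seqTail (x : ℕ → α) (i : ℕ) : α := x (i + 1)

def iteratedPalClosure (x : ℕ → α) : ℕ → List α
  | 0 => []
  | n + 1 => palClosure (iteratedPalClosure x n ++ [x (n + 1)])

theorem muW_succ_eq (x : ℕ → α) (n : ℕ) (w : List α) :
    muW x (n + 1) w = psiW (x 1) (muW (seqTail x) n w) := by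
  induction n generalizing w with
  | zero => rfl
  | succ n ih => exact ih (psiW (x (n + 2)) w)

theorem hW_succ_eq (x : ℕ → α) (n : ℕ) : hW x (n + 1) = psiW (x 1) (hW (seqTail x) n) :=
  muW_succ_eq x n _

theorem iteratedPalClosure_succ_eq (x : ℕ → α) (n : ℕ) :
    iteratedPalClosure x (n + 1) = psiW (x 1) (iteratedPalClosure (seqTail x) n) ++ [x 1] := by
  induction n with
  | zero => exact palClosure_of_reverse_eq rfl
  | succ n ih =>
    rw [iteratedPalClosure, ih, List.append_assoc, List.singleton_append,
      palClosure_psiW_append_pair]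
    rfl

theorem hW_eq_iteratedPalClosure_append {x : ℕ → α} {m : ℕ}
    (hfresh : ∀ i, 1 ≤ i → i ≤ m → x i ≠ x (m + 1)) :
    hW x m = iteratedPalClosure x m ++ [x (m + 1)] := by
  induction m generalizing x with
  | zero => rfl
  | succ m ih =>
    have hx1 : seqTail x (m + 1) ≠ x 1 := (hfresh 1 le_rfl (by omega)).symm
    rw [hW_succ_eq, ih (x := seqTail x) fun i hi₁ hi₂ => hfresh (i + 1) (by omega) (by omega),
      psiW_append, psiW_singleton, if_neg hx1, iteratedPalClosure_succ_eq]
    simp [seqTail]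

theorem iteratedPalClosure_eq_hW_append {x : ℕ → α} {m p : ℕ} (hpm : p < m)
    (hxp : x (p + 1) = x (m + 1)) (hgap : ∀ i, p + 1 < i → i ≤ m → x i ≠ x (m + 1)) :
    iteratedPalClosure x m = hW x m ++ iteratedPalClosure x p := by
  induction m generalizing x p with
  | zero => omega
  | succ m ih =>
    rw [hW_succ_eq, iteratedPalClosure_succ_eq]
    cases p with
    | zero =>
      rw [hW_eq_iteratedPalClosure_append (x := seqTail x)
          fun i hi₁ hi₂ => hgap (i + 1) (by omega) (by omega),
        psiW_append, psiW_singleton, if_pos (show seqTail x (m + 1) = x 1 from hxp.symm),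
        iteratedPalClosure, List.append_nil]
    | succ p =>
      rw [ih (x := seqTail x) (by omega) hxp
          fun i hi₁ hi₂ => hgap (i + 1) (by omega) (by omega),
        psiW_append, iteratedPalClosure_succ_eq, List.append_assoc]

end DirectiveWord

theorem u_eq_iteratedPalClosure {x : ℕ → A} {u : ℕ → List A} (hu1 : u 1 = [])
    (hu : ∀ n : ℕ, 1 ≤ n → IsPalClosure (u n ++ [x n]) (u (n + 1))) (k : ℕ) :
    u (k + 1) = iteratedPalClosure x k := by
  induction k with
  | zero => exact hu1
  | succ k ih => rw [(hu (k + 1) (by omega)).eq_palClosure, ih, iteratedPalClosure]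

theorem h_eq_u_formula (x : ℕ → A) (u : ℕ → List A) (hu1 : u 1 = [])
    (hu : ∀ n : ℕ, 1 ≤ n → IsPalClosure (u n ++ [x n]) (u (n + 1))) (n : ℕ) (hn : 1 ≤ n) :
    ((∀ i : ℕ, 1 ≤ i → i < n → x i ≠ x n) → hW x (n - 1) = u n ++ [x n]) ∧
    (∀ p : ℕ, 1 ≤ p → p < n → x p = x n → (∀ i : ℕ, p < i → i < n → x i ≠ x n) →
      u n = hW x (n - 1) ++ u p) := by
  obtain ⟨m, rfl⟩ : ∃ m, n = m + 1 := ⟨n - 1, by omega⟩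
  have hu' := u_eq_iteratedPalClosure hu1 hu
  rw [Nat.add_sub_cancel, hu' m]
  refine ⟨fun hfresh =>
    hW_eq_iteratedPalClosure_append fun i hi₁ hi₂ => hfresh i hi₁ (by omega), ?_⟩
  intro p hp₁ hp₂ hxp hgap
  obtain ⟨p, rfl⟩ : ∃ q, p = q + 1 := ⟨p - 1, by omega⟩
  rw [hu' p]
  exact iteratedPalClosure_eq_hW_append (by omega) hxp fun i hi₁ hi₂ => hgap i hi₁ (by omega)
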